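/- arXiv:1108.6185 — 7 statements merged into one kernel-verified Lean document; each statement's English description precedes it below -/
import Mathlib

section
/- The vectors ev_S(X_1^{i_1}···X_m^{i_m}) for 0 ≤ i_j < |S_j| (j = 1,...,m) form a basis of F_q^n as a vector space over F_q, where n = |S_1|···|S_m|. -/
/-!
By the Combinatorial Nullstellensatz, a polynomial in which every exponent of `X i` is smaller
than `|S i|` and which vanishes on the grid `S 1 × ⋯ × S m` is zero. Hence the evaluations of
these reduced monomials on the grid are linearly independent, and as there are exactly
`∏ i, |S i| = n` of them, they form a basis of `K ^ n`.
-/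

open MvPolynomial Finset

noncomputable def finsuppBoundedEquivPiFin {σ : Type*} [Finite σ] (c : σ → ℕ) :
    {d : σ →₀ ℕ // ∀ i, d i < c i} ≃ ∀ i, Fin (c i) where
  toFun d i := ⟨d.1 i, d.2 i⟩
  invFun f := ⟨Finsupp.equivFunOnFinite.symm fun i => f i, fun i => by simp⟩
  left_inv d := by ext; simp
  right_inv f := by ext; simp

section Grid

variable {σ R : Type*} [CommRing R] [IsDomain R]

theorem MvPolynomial.eq_zero_of_eval_zero_at_prod_finset_of_exponents_lt [Finite σ]
    {p : MvPolynomial σ R} (S : σ → Finset R) (hexp : ∀ d ∈ p.support, ∀ i, d i < #(S i))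
    (heval : ∀ x : σ → R, (∀ i, x i ∈ S i) → eval x p = 0) : p = 0 := by
  by_contra hp
  obtain ⟨d, hd⟩ := support_nonempty.mpr hp
  refine hp (eq_zero_of_eval_zero_at_prod_finset p S (fun i => ?_) heval)
  exact (degreeOf_lt_iff (Nat.zero_lt_of_lt (hexp d hd i))).mpr fun e he => hexp e he i

variable [Fintype σ] [DecidableEq σ]

theorem linearIndependent_eval_monomial_piFinset (S : σ → Finset R) :
    LinearIndependent R fun d : {d : σ →₀ ℕ // ∀ i, d i < #(S i)} =>
      fun a : {a // a ∈ Fintype.piFinset S} => eval a.1 (monomial d.1 (1 : R)) := by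
  rw [linearIndependent_iff']
  intro s g hsum d hd
  let p : MvPolynomial σ R := ∑ e ∈ s, monomial e.1 (g e)
  have hexp : ∀ e ∈ p.support, ∀ i, e i < #(S i) := by
    intro e he i
    obtain ⟨e', -, he'⟩ := mem_biUnion.mp (support_sum he)
    rw [mem_singleton.mp (support_monomial_subset he')]
    exact e'.2 i
  have heval : ∀ x : σ → R, (∀ i, x i ∈ S i) → eval x p = 0 := fun x hx => by
    simpa [p, eval_monomial] using congrFun hsum ⟨x, Fintype.mem_piFinset.mpr hx⟩
  have hp : p = 0 := eq_zero_of_eval_zero_at_prod_finset_of_exponents_lt S hexp heval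
  simpa [p, coeff_sum, coeff_monomial, Subtype.val_inj, hd] using congrArg (coeff d.1) hp

end Grid

theorem monomial_evaluations_basis_general {m : ℕ} {K : Type*} [Field K]
    (S : Fin m → Finset K) :
    ∃ B : Module.Basis {d : Fin m →₀ ℕ // ∀ i, d i < (S i).card} K
        ({a // a ∈ Fintype.piFinset S} → K),
      ∀ d, B d = fun a => MvPolynomial.eval a.1 (MvPolynomial.monomial d.1 (1 : K)) := by
  let e := finsuppBoundedEquivPiFin fun i => #(S i)
  let := Fintype.ofEquiv _ e.symm
  have hcard : Fintype.card {d : Fin m →₀ ℕ // ∀ i, d i < #(S i)} =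
      Module.finrank K ({a // a ∈ Fintype.piFinset S} → K) := by
    simp [Fintype.card_congr e, Module.finrank_fintype_fun_eq_card]
  exact ⟨basisOfLinearIndependentOfCardEqFinrank' _ (linearIndependent_eval_monomial_piFinset S)
    hcard, fun d => by rw [coe_basisOfLinearIndependentOfCardEqFinrank']⟩

/-- The vectors `ev_S(X_1^{i_1}⋯X_m^{i_m})` for `0 ≤ i_j < |S_j|` form a
basis of `F_q^n` (identified with the functions on the grid `S_1 × ⋯ × S_m`). -/
theorem monomial_evaluations_basis {m : ℕ} {K : Type*} [Field K] [Fintype K]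
    (S : Fin m → Finset K) (hS : ∀ i, (S i).Nonempty) :
    ∃ B : Module.Basis {d : Fin m →₀ ℕ // ∀ i, d i < (S i).card} K
        ({a // a ∈ Fintype.piFinset S} → K),
      ∀ d, B d = fun a => MvPolynomial.eval a.1 (MvPolynomial.monomial d.1 (1 : K)) :=
  monomial_evaluations_basis_general S
end

section
/- (Schwartz–Zippel for grids, lexicographic version) Let F be a field, and let F(X_1,...,X_m) be a nonzero polynomial whose leading monomial with respect to a lexicographic ordering is X_1^{i_1}···X_m^{i_m}. Then the number of zeros of F in S_1 × ... × S_m is at most i_1 s_2···s_m + s_1 i_2 s_3···s_m + ... + s_1···s_{m-1} i_m, where s_j = |S_j|. -/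
/-!
Induct on the number of variables, writing `F = ∑ₖ Gₖ(X₂, …, Xₘ) X₁ᵏ`. Lexicographic leadership of
`I` forces `Gₖ = 0` for `k > i₁` and makes `I.tail` the leading exponent of `G := G_{i₁}`. A zero
`(a, t)` of `F` in the grid either has `G(t) = 0`, and there are at most `s₁` times the inductive
bound for `G` of those, or `G(t) ≠ 0`, and then `a` is a root of the nonzero polynomial `F(X, t)` of
degree at most `i₁`, which leaves at most `i₁ s₂ ⋯ sₘ` zeros of the second kind.
-/

open Finset Classical

namespace Finsupp

variable {n : ℕ} {N : Type*} [Zero N] [LinearOrder N]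

theorem toLex_cons_lt_cons_iff {a b : N} {x y : Fin n →₀ N} :
    toLex (cons a x) < toLex (cons b y) ↔ a < b ∨ a = b ∧ toLex x < toLex y := by
  simp only [Lex.lt_iff, Fin.exists_fin_succ, Fin.forall_fin_succ, ofLex_toLex, cons_zero,
    cons_succ, Fin.succ_lt_succ_iff, Fin.not_lt_zero, Fin.succ_pos, IsEmpty.forall_iff,
    true_imp_iff, implies_true, true_and, and_assoc, exists_and_left]

theorem toLex_cons_le_cons_iff {a b : N} {x y : Fin n →₀ N} :
    toLex (cons a x) ≤ toLex (cons b y) ↔ a < b ∨ a = b ∧ toLex x ≤ toLex y := by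
  simp only [← not_lt, toLex_cons_lt_cons_iff]
  grind

theorem apply_zero_le_of_toLex_le {x y : Fin (n + 1) →₀ N} (h : toLex x ≤ toLex y) :
    x 0 ≤ y 0 := by
  rw [← cons_tail x, ← cons_tail y, toLex_cons_le_cons_iff] at h
  simpa using h.imp le_of_lt fun h => h.1.le

end Finsupp

namespace Fin

variable {n : ℕ}

theorem sum_mul_prod_erase_succ {M : Type*} [CommSemiring M] (a c : Fin (n + 1) → M) :
    ∑ j, a j * ∏ k ∈ univ.erase j, c k =
      a 0 * ∏ k : Fin n, c k.succ +
        c 0 * ∑ j : Fin n, a j.succ * ∏ k ∈ univ.erase j, c k.succ := by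
  have erase_zero : univ.erase (0 : Fin (n + 1)) = univ.map (succEmb n) := by
    rw [univ_succ, Finset.erase_cons]
    rfl
  have erase_succ (j : Fin n) : univ.erase j.succ =
      Finset.cons 0 ((univ.erase j).map (succEmb n)) (by simp) := by
    ext k
    cases k using Fin.cases
    · simpa using (succ_ne_zero j).symm
    · simp
  rw [sum_univ_succ, erase_zero, prod_map, mul_sum]
  congr 1
  refine sum_congr rfl fun j _ => ?_
  rw [erase_succ, Finset.prod_cons, prod_map]
  simp only [coe_succEmb]
  ring

variable {α : Type*} (S : Fin (n + 1) → Finset α) (P : (Fin (n + 1) → α) → Prop) [DecidablePred P]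

theorem card_filter_piFinset_eq_sum :
    #{x ∈ Fintype.piFinset S | P x} =
      ∑ t ∈ Fintype.piFinset (tail S), #{a ∈ S 0 | P (cons a t)} := by
  have : #{x ∈ Fintype.piFinset S | P x} =
      #{p ∈ S 0 ×ˢ Fintype.piFinset (tail S) | P (cons p.1 p.2)} := by
    apply card_nbij' (fun x => (x 0, tail x)) (fun p => cons p.1 p.2)
    · intro x hx
      simp_all only [coe_filter, Set.mem_ofPred_eq, mem_piFinset_iff_zero_tail,
        mem_product, cons_self_tail, and_self]
    · rintro ⟨a, t⟩ h
      simp_all only [coe_filter, Set.mem_ofPred_eq, mem_piFinset_iff_zero_tail,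
        mem_product, cons_zero, tail_cons, and_self]
    · intro x _
      simp
    · intro p _
      simp
  rw [this, card_filter, sum_product_right]
  simp only [card_filter]

theorem card_filter_piFinset_le_of_card_fiber_le (Q : (Fin n → α) → Prop) [DecidablePred Q]
    (d : ℕ) (hfiber : ∀ t ∈ Fintype.piFinset (tail S), ¬Q t → #{a ∈ S 0 | P (cons a t)} ≤ d) :
    #{x ∈ Fintype.piFinset S | P x} ≤
      d * ∏ i : Fin n, #(S i.succ) + #(S 0) * #{t ∈ Fintype.piFinset (tail S) | Q t} := by
  rw [card_filter_piFinset_eq_sum, ← sum_filter_not_add_sum_filter _ Q]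
  gcongr
  · calc _ ≤ #{t ∈ Fintype.piFinset (tail S) | ¬Q t} • d :=
          sum_le_card_nsmul _ _ _ fun t ht => hfiber t (mem_filter.mp ht).1 (mem_filter.mp ht).2
      _ ≤ #(Fintype.piFinset (tail S)) * d := Nat.mul_le_mul_right _ (card_filter_le _ _)
      _ = d * ∏ i : Fin n, #(S i.succ) := by rw [Fintype.card_piFinset, mul_comm]; rfl
  · calc _ ≤ #{t ∈ Fintype.piFinset (tail S) | Q t} • #(S 0) :=
          sum_le_card_nsmul _ _ _ fun t _ => card_filter_le _ _
      _ = #(S 0) * #{t ∈ Fintype.piFinset (tail S) | Q t} := by rw [smul_eq_mul, mul_comm]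

end Fin

namespace MvPolynomial

variable {R : Type*} {n : ℕ}

theorem card_filter_eval_cons_eq_zero_le [CommRing R] [IsDomain R]
    {F : MvPolynomial (Fin (n + 1)) R} {k : ℕ} (hdeg : (finSuccEquiv R n F).natDegree ≤ k)
    (s : Finset R) {t : Fin n → R} (ht : eval t ((finSuccEquiv R n F).coeff k) ≠ 0) :
    #{a ∈ s | eval (Fin.cons a t) F = 0} ≤ k := by
  rw [← Polynomial.coeff_map] at ht
  set p := (finSuccEquiv R n F).map (eval t)
  have hp : p ≠ 0 := fun h => ht (by rw [h, Polynomial.coeff_zero])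
  calc _ ≤ p.natDegree := Polynomial.card_le_degree_of_subset_roots fun a ha => by
        simp only [mem_val, mem_filter, eval_eq_eval_mv_eval'] at ha
        exact (Polynomial.mem_roots hp).mpr ha.2
    _ ≤ k := Polynomial.natDegree_map_le.trans hdeg

variable [CommSemiring R] {F : MvPolynomial (Fin (n + 1)) R} {I : Fin (n + 1) →₀ ℕ}

theorem natDegree_finSuccEquiv_le_of_toLex_le (hlead : ∀ d ∈ F.support, toLex d ≤ toLex I) :
    (finSuccEquiv R n F).natDegree ≤ I 0 := by
  rw [natDegree_finSuccEquiv, degreeOf_le_iff]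
  exact fun d hd => Finsupp.apply_zero_le_of_toLex_le (hlead d hd)

theorem finSuccEquiv_coeff_coeff_tail (F : MvPolynomial (Fin (n + 1)) R)
    (I : Fin (n + 1) →₀ ℕ) : ((finSuccEquiv R n F).coeff (I 0)).coeff I.tail = F.coeff I := by
  rw [finSuccEquiv_coeff_coeff, Finsupp.cons_tail]

theorem toLex_le_tail_of_mem_support_coeff_finSuccEquiv
    (hlead : ∀ d ∈ F.support, toLex d ≤ toLex I) :
    ∀ e ∈ ((finSuccEquiv R n F).coeff (I 0)).support, toLex e ≤ toLex I.tail := by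
  intro e he
  have h := hlead _ (mem_support_coeff_finSuccEquiv.mp he)
  rw [← Finsupp.cons_tail I, Finsupp.toLex_cons_le_cons_iff] at h
  simpa using h

end MvPolynomial

open MvPolynomial

/-- Schwartz–Zippel for grids, lexicographic version: if the leading
monomial of a nonzero polynomial `F` with respect to the lexicographic ordering
(`X_1 ≻ X_2 ≻ ⋯ ≻ X_m`) is `X_1^{i_1}⋯X_m^{i_m}`, then the number of zeros of `F` in
`S_1 × ⋯ × S_m` is at most `i_1 s_2⋯s_m + s_1 i_2 s_3⋯s_m + ⋯ + s_1⋯s_{m-1} i_m`. -/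
theorem schwartz_zippel_lex {m : ℕ} {K : Type*} [Field K]
    (S : Fin m → Finset K) (F : MvPolynomial (Fin m) K) (I : Fin m →₀ ℕ)
    (hcoeff : F.coeff I ≠ 0)
    (hlead : ∀ d ∈ F.support, toLex d ≤ toLex I) :
    ((Fintype.piFinset S).filter (fun a => MvPolynomial.eval a F = 0)).card
      ≤ ∑ j : Fin m, I j * ∏ k ∈ Finset.univ.erase j, (S k).card := by
  induction m with
  | zero =>
    have hF (a : Fin 0 → K) : eval a F ≠ 0 := by
      rwa [F.eq_C_of_isEmpty, eval_C, ← Subsingleton.elim I 0]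
    simp [filter_eq_empty_iff.mpr fun a _ => hF a]
  | succ n ih =>
    set G := (finSuccEquiv K n F).coeff (I 0)
    calc _ ≤ I 0 * ∏ i : Fin n, #(S i.succ) +
          #(S 0) * #{t ∈ Fintype.piFinset (Fin.tail S) | eval t G = 0} :=
        Fin.card_filter_piFinset_le_of_card_fiber_le S _ _ _ fun t _ ht =>
          card_filter_eval_cons_eq_zero_le (natDegree_finSuccEquiv_le_of_toLex_le hlead) _ ht
      _ ≤ I 0 * ∏ i : Fin n, #(S i.succ) +
          #(S 0) * ∑ j : Fin n, I.tail j * ∏ k ∈ univ.erase j, #(Fin.tail S k) := by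
        gcongr
        exact ih _ G I.tail (by rwa [finSuccEquiv_coeff_coeff_tail])
          (toLex_le_tail_of_mem_support_coeff_finSuccEquiv hlead)
      _ = _ := (Fin.sum_mul_prod_erase_succ (fun j => I j) fun k => #(S k)).symm
end

section
/- The minimum distance of the affine variety code E(M,S) is at least min{(s_1−i_1)(s_2−i_2)···(s_m−i_m) : X_1^{i_1}···X_m^{i_m} ∈ M}, and this bound is attained with equality if M is closed under taking divisors of monomials. -/
/-!
Footprint bound: a nonzero `f` has a monomial `X^d` in its support with at least
`∏ i, (s_i - d_i)` non-zeros on `S`. View `f` as a polynomial in `X_0` of degree `t` whose leading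
coefficient `g` involves only the other variables; by induction `g` has a monomial `X^e` with at
least `∏ i, (s_{i+1} - e_i)` non-zeros, and at each of them `f` specialises to a univariate
polynomial of degree `t`, which has at least `s_0 - t` non-roots in `S_0`; take `d = (t, e)`.
Every codeword of `E(M,S)` is the evaluation of such an `f` supported in `M`.

For sharpness, let `d ∈ M` attain the minimum and pick `T_i ⊆ S_i` with `|T_i| = d_i`: the
polynomial `∏ i, ∏ a ∈ T_i, (X_i - a)` is non-zero exactly on `∏ i, (S_i \ T_i)`, and its
monomials divide `X^d`, so they lie in `M` once `M` is closed under divisors.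
-/

open Finset Fintype MvPolynomial

theorem Finset.card_filter_univ_subtype {α : Type*} (s : Finset α) (p : α → Prop)
    [DecidablePred p] : #{a : s | p a} = #{x ∈ s | p x} := by
  rw [univ_eq_attach, filter_attach, card_map, card_attach]

namespace Polynomial

variable {R : Type*} [CommRing R] [IsDomain R] [DecidableEq R]

theorem card_sub_natDegree_le_card_filter_eval_ne_zero {p : R[X]} (hp : p ≠ 0)
    (s : Finset R) : #s - p.natDegree ≤ #{x ∈ s | p.eval x ≠ 0} := by
  have hroots : #{x ∈ s | p.eval x = 0} ≤ p.natDegree :=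
    card_le_degree_of_subset_roots fun x hx => by
      simp only [Finset.filter_val, Multiset.mem_filter] at hx
      exact (mem_roots hp).2 hx.2
  have := card_filter_add_card_filter_not (s := s) (fun x => p.eval x = 0)
  simp only [ne_eq] at *
  omega

end Polynomial

theorem Fin.card_filter_piFinset_eq_sum_s7 {n : ℕ} {α : Type*} (S : Fin (n + 1) → Finset α)
    (P : (Fin (n + 1) → α) → Prop) [DecidablePred P] :
    #{x ∈ piFinset S | P x} = ∑ y ∈ piFinset (Fin.tail S), #{a ∈ S 0 | P (Fin.cons a y)} := by
  have h := filter_piFinset_eq_map_consEquiv S (fun _ => True)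
  simp only [filter_true] at h
  rw [h, filter_map, card_map, card_filter, sum_product_right]
  refine sum_congr rfl fun y _ => ?_
  rw [card_filter]
  rfl

namespace MvPolynomial

variable {σ R : Type*} [CommRing R]

section Footprint

variable [IsDomain R] [DecidableEq R]

theorem card_sub_natDegree_mul_card_le_card_filter_eval_ne_zero {n : ℕ}
    (f : MvPolynomial (Fin (n + 1)) R) (S : Fin (n + 1) → Finset R) :
    (#(S 0) - (finSuccEquiv R n f).natDegree) *
        #{y ∈ piFinset (Fin.tail S) | eval y (finSuccEquiv R n f).leadingCoeff ≠ 0} ≤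
      #{x ∈ piFinset S | eval x f ≠ 0} := by
  set F := finSuccEquiv R n f
  calc (#(S 0) - F.natDegree) * #{y ∈ piFinset (Fin.tail S) | eval y F.leadingCoeff ≠ 0}
      = ∑ y ∈ piFinset (Fin.tail S) with eval y F.leadingCoeff ≠ 0, (#(S 0) - F.natDegree) := by
        rw [sum_const, smul_eq_mul, mul_comm]
    _ ≤ ∑ y ∈ piFinset (Fin.tail S) with eval y F.leadingCoeff ≠ 0,
          #{a ∈ S 0 | eval (Fin.cons a y) f ≠ 0} := by
        refine sum_le_sum fun y hy => ?_
        have hlc : eval y F.leadingCoeff ≠ 0 := (mem_filter.1 hy).2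
        have hdeg : (F.map (eval y)).natDegree = F.natDegree :=
          Polynomial.natDegree_map_of_leadingCoeff_ne_zero _ hlc
        have hne : F.map (eval y) ≠ 0 := Polynomial.leadingCoeff_ne_zero.1 <| by
          rwa [Polynomial.leadingCoeff_map_of_leadingCoeff_ne_zero _ hlc]
        simpa only [eval_eq_eval_mv_eval', hdeg] using
          Polynomial.card_sub_natDegree_le_card_filter_eval_ne_zero hne (S 0)
    _ ≤ ∑ y ∈ piFinset (Fin.tail S), #{a ∈ S 0 | eval (Fin.cons a y) f ≠ 0} :=
        sum_le_sum_of_subset (filter_subset _ _)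
    _ = #{x ∈ piFinset S | eval x f ≠ 0} :=
        (Fin.card_filter_piFinset_eq_sum_s7 S fun x => eval x f ≠ 0).symm

theorem exists_mem_support_prod_card_sub_le_card_filter_eval_ne_zero :
    ∀ {n : ℕ} {f : MvPolynomial (Fin n) R}, f ≠ 0 → ∀ S : Fin n → Finset R,
      ∃ d ∈ f.support, ∏ i, (#(S i) - d i) ≤ #{x ∈ piFinset S | eval x f ≠ 0}
  | 0, f, hf, S => by
    have hc : coeff 0 f ≠ 0 := by rwa [f.eq_C_of_isEmpty, C_ne_zero] at hf
    rw [f.eq_C_of_isEmpty]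
    refine ⟨0, by simpa using hc, ?_⟩
    simp [piFinset_of_isEmpty, hc]
  | n + 1, f, hf, S => by
    set F := finSuccEquiv R n f
    have hF : F ≠ 0 := EmbeddingLike.map_ne_zero_iff.2 hf
    obtain ⟨e, he, hcard⟩ := exists_mem_support_prod_card_sub_le_card_filter_eval_ne_zero
      (Polynomial.leadingCoeff_ne_zero.2 hF) (Fin.tail S)
    refine ⟨e.cons F.natDegree, mem_support_coeff_finSuccEquiv.1 he, ?_⟩
    calc ∏ i, (#(S i) - e.cons F.natDegree i)
        = (#(S 0) - F.natDegree) * ∏ i, (#(Fin.tail S i) - e i) := by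
          simp [Fin.prod_univ_succ, Fin.tail]
      _ ≤ (#(S 0) - F.natDegree) * #{y ∈ piFinset (Fin.tail S) | eval y F.leadingCoeff ≠ 0} :=
          Nat.mul_le_mul_left _ hcard
      _ ≤ _ := card_sub_natDegree_mul_card_le_card_filter_eval_ne_zero f S

end Footprint

section Construction

variable [Fintype σ]

theorem degreeOf_prod_prod_X_sub_C_le [Nontrivial R] (T : σ → Finset R) (i : σ) :
    degreeOf i (∏ j, ∏ a ∈ T j, (X j - C a)) ≤ #(T i) := by
  classical
  calc degreeOf i (∏ j, ∏ a ∈ T j, (X j - C a))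
      ≤ ∑ j, ∑ a ∈ T j, degreeOf i (X j - C a) :=
        (degreeOf_prod_le _ _ _).trans (sum_le_sum fun j _ => degreeOf_prod_le _ _ _)
    _ ≤ ∑ j, ∑ _a ∈ T j, if i = j then 1 else 0 := by
        gcongr with j _ a _
        simpa [degreeOf_X, degreeOf_C] using degreeOf_sub_le i (X j) (C a)
    _ = #(T i) := by simp

variable [IsDomain R] [DecidableEq σ] [DecidableEq R]

theorem filter_piFinset_eval_prod_prod_X_sub_C_ne_zero (S T : σ → Finset R) :
    {x ∈ piFinset S | eval x (∏ j, ∏ a ∈ T j, (X j - C a)) ≠ 0} =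
      piFinset fun i => S i \ T i := by
  ext x
  simp [prod_ne_zero_iff, sub_eq_zero, forall_and]

theorem exists_support_le_card_filter_eval_ne_zero_eq (S : σ → Finset R) {d : σ →₀ ℕ}
    (hd : ∀ i, d i ≤ #(S i)) :
    ∃ f : MvPolynomial σ R, (∀ e ∈ f.support, e ≤ d) ∧
      #{x ∈ piFinset S | eval x f ≠ 0} = ∏ i, (#(S i) - d i) := by
  choose T hTS hT using fun i => exists_subset_card_eq (hd i)
  refine ⟨∏ j, ∏ a ∈ T j, (X j - C a), fun e he i => ?_, ?_⟩
  · exact (monomial_le_degreeOf i he).trans ((degreeOf_prod_prod_X_sub_C_le T i).trans (hT i).le)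
  · rw [filter_piFinset_eval_prod_prod_X_sub_C_ne_zero, card_piFinset]
    exact prod_congr rfl fun i _ => by rw [card_sdiff_of_subset (hTS i), hT i]

end Construction

noncomputable def evalOn (P : Finset (σ → R)) : MvPolynomial σ R →ₗ[R] (P → R) :=
  LinearMap.pi fun a => (aeval a.1).toLinearMap

theorem span_image_eval_monomial (P : Finset (σ → R)) (M : Set (σ →₀ ℕ)) :
    Submodule.span R ((fun d (a : P) => eval a.1 (monomial d (1 : R))) '' M) =
      (restrictSupport R M).map (evalOn P) := by
  rw [restrictSupport_eq_span, Submodule.map_span, Set.image_image]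
  rfl

theorem card_filter_evalOn_ne_zero [DecidableEq R] (P : Finset (σ → R)) (f : MvPolynomial σ R) :
    #{a | evalOn P f a ≠ 0} = #{x ∈ P | eval x f ≠ 0} :=
  card_filter_univ_subtype P fun x => eval x f ≠ 0

end MvPolynomial

open Classical

theorem affine_variety_code_min_distance_general {m : ℕ} {K : Type*} [Field K]
    (S : Fin m → Finset K) (M : Finset (Fin m →₀ ℕ)) (hMne : M.Nonempty)
    (hM : ∀ d ∈ M, ∀ i, d i < (S i).card) :
    ∀ δ, δ = (M.image fun d => ∏ i : Fin m, ((S i).card - d i)).min' (hMne.image _) →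
    ∀ ev : (Fin m →₀ ℕ) → ({a // a ∈ Fintype.piFinset S} → K),
      ev = (fun d a => MvPolynomial.eval a.1 (MvPolynomial.monomial d (1 : K))) →
    ((∀ c ∈ Submodule.span K (ev '' ↑M), c ≠ 0 →
        δ ≤ (Finset.univ.filter (fun a => c a ≠ 0)).card) ∧
     ((∀ d ∈ M, ∀ e : Fin m →₀ ℕ, e ≤ d → e ∈ M) →
        ∃ c ∈ Submodule.span K (ev '' ↑M), c ≠ 0 ∧
          (Finset.univ.filter (fun a => c a ≠ 0)).card = δ)) := by
  rintro δ rfl ev rfl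
  rw [span_image_eval_monomial]
  refine ⟨?_, fun hclosed => ?_⟩
  · rintro _ ⟨f, hfM, rfl⟩ hc
    have hf : f ≠ 0 := by rintro rfl; exact hc (map_zero _)
    obtain ⟨d, hd, hcard⟩ := exists_mem_support_prod_card_sub_le_card_filter_eval_ne_zero hf S
    rw [card_filter_evalOn_ne_zero]
    exact (min'_le _ _ (mem_image_of_mem _ (hfM hd))).trans hcard
  · obtain ⟨d, hdM, hd⟩ := mem_image.1 (min'_mem _ (hMne.image fun d => ∏ i, (#(S i) - d i)))
    obtain ⟨f, hfd, hcard⟩ :=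
      exists_support_le_card_filter_eval_ne_zero_eq S fun i => (hM d hdM i).le
    have hweight : #{a : piFinset S | evalOn _ f a ≠ 0} = ∏ i, (#(S i) - d i) := by
      rw [card_filter_evalOn_ne_zero, hcard]
    have hpos : 0 < ∏ i, (#(S i) - d i) := prod_pos fun i _ => Nat.sub_pos_of_lt (hM d hdM i)
    refine ⟨evalOn _ f, Submodule.mem_map_of_mem fun e he => hclosed d hdM e (hfd e he), ?_, ?_⟩
    · intro h
      rw [h] at hweight
      simp only [Pi.zero_apply, ne_eq, not_true_eq_false, filter_false,
        Finset.card_empty] at hweight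
      omega
    · rw [hweight, hd]

/-- The minimum distance of the affine variety code `E(M,S)` is at least
`min{(s_1−i_1)⋯(s_m−i_m) : X_1^{i_1}⋯X_m^{i_m} ∈ M}`, with equality when `M` is closed
under taking divisors of monomials. -/
theorem affine_variety_code_min_distance {m : ℕ} {K : Type*} [Field K] [Fintype K]
    (S : Fin m → Finset K) (M : Finset (Fin m →₀ ℕ)) (hMne : M.Nonempty)
    (hM : ∀ d ∈ M, ∀ i, d i < (S i).card) :
    ∀ δ, δ = (M.image fun d => ∏ i : Fin m, ((S i).card - d i)).min' (hMne.image _) →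
    ∀ ev : (Fin m →₀ ℕ) → ({a // a ∈ Fintype.piFinset S} → K),
      ev = (fun d a => MvPolynomial.eval a.1 (MvPolynomial.monomial d (1 : K))) →
    ((∀ c ∈ Submodule.span K (ev '' ↑M), c ≠ 0 →
        δ ≤ (Finset.univ.filter (fun a => c a ≠ 0)).card) ∧
     ((∀ d ∈ M, ∀ e : Fin m →₀ ℕ, e ≤ d → e ∈ M) →
        ∃ c ∈ Submodule.span K (ev '' ↑M), c ≠ 0 ∧
          (Finset.univ.filter (fun a => c a ≠ 0)).card = δ)) :=
  affine_variety_code_min_distance_general S M hMne hM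
end

section
/- Fix s_1 ≥ s_2 > 0 and weights w_1, w_2 > 0 with ρ = w_1/w_2 ≤ s_2/s_1, and let 0 < u ≤ (s_1−1)w_1. Then the minimum of (s_1−i_1)(s_2−i_2) over rational i_1, i_2 with 0 ≤ i_1 ≤ s_1−1, 0 ≤ i_2 ≤ s_2−1, w_1 i_1 + w_2 i_2 = u equals s_2(s_1 − u/w_1). -/
/-!
On the line `w₁ i₁ + w₂ i₂ = u` the objective exceeds its value `s₂ (s₁ - u / w₁)` at the endpoint
`i₂ = 0` by exactly `i₂ ((w₂ s₂ - w₁ s₁) / w₁ + i₁)`, which is nonnegative once `w₁ s₁ ≤ w₂ s₂`,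
i.e. once `ρ ≤ s₂ / s₁`.
-/

section

variable {K : Type*} [Field K] [LinearOrder K] [IsStrictOrderedRing K]

theorem mul_sub_div_le_sub_mul_sub {a b w₁ w₂ i₁ i₂ : K} (hw₁ : 0 < w₁)
    (hab : w₁ * a ≤ w₂ * b) (hi₁ : 0 ≤ i₁) (hi₂ : 0 ≤ i₂) :
    b * (a - (w₁ * i₁ + w₂ * i₂) / w₁) ≤ (a - i₁) * (b - i₂) := by
  have excess : (a - i₁) * (b - i₂) - b * (a - (w₁ * i₁ + w₂ * i₂) / w₁)
      = i₂ * ((w₂ * b - w₁ * a) / w₁ + i₁) := by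
    field_simp
    ring
  have : 0 ≤ i₂ * ((w₂ * b - w₁ * a) / w₁ + i₁) :=
    mul_nonneg hi₂ (add_nonneg (div_nonneg (sub_nonneg.2 hab) hw₁.le) hi₁)
  linarith

end

theorem min_distance_region_I_general (s1 s2 : ℕ) (hs2 : 0 < s2)
    (w1 w2 u : ℚ) (hw1 : 0 < w1) (hw2 : 0 < w2)
    (hρ : w1 / w2 ≤ (s2 : ℚ) / s1)
    (hu0 : 0 < u) (huu : u ≤ ((s1 : ℚ) - 1) * w1) :
    IsLeast {v : ℚ | ∃ i1 i2 : ℚ,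
        0 ≤ i1 ∧ i1 ≤ (s1 : ℚ) - 1 ∧ 0 ≤ i2 ∧ i2 ≤ (s2 : ℚ) - 1 ∧
        w1 * i1 + w2 * i2 = u ∧ v = ((s1 : ℚ) - i1) * ((s2 : ℚ) - i2)}
      ((s2 : ℚ) * ((s1 : ℚ) - u / w1)) := by
  have hs1 : (0 : ℚ) < s1 := by
    have : 0 < ((s1 : ℚ) - 1) * w1 := hu0.trans_le huu
    linarith [pos_of_mul_pos_left this hw1.le]
  have hs2' : (1 : ℚ) ≤ s2 := by exact_mod_cast hs2
  have hweights : w1 * s1 ≤ w2 * s2 := by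
    rw [div_le_div_iff₀ hw2 hs1] at hρ
    linarith
  refine ⟨⟨u / w1, 0, (div_pos hu0 hw1).le, ?_, le_rfl, by linarith, ?_, by ring⟩, ?_⟩
  · rwa [div_le_iff₀ hw1]
  · field_simp
    ring
  · rintro v ⟨i1, i2, hi1, -, hi2, -, rfl, rfl⟩
    exact mul_sub_div_le_sub_mul_sub hw1 hweights hi1 hi2

/-- for `s_1 ≥ s_2 > 0`, weights `w_1, w_2 > 0` with
`ρ = w_1/w_2 ≤ s_2/s_1`, and `0 < u ≤ (s_1−1)w_1`, the minimum of
`(s_1−i_1)(s_2−i_2)` over rational `0 ≤ i_1 ≤ s_1−1`, `0 ≤ i_2 ≤ s_2−1` with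
`w_1 i_1 + w_2 i_2 = u` equals `s_2(s_1 − u/w_1)`. -/
theorem min_distance_region_I (s1 s2 : ℕ) (hs2 : 0 < s2) (hs : s2 ≤ s1)
    (w1 w2 u : ℚ) (hw1 : 0 < w1) (hw2 : 0 < w2)
    (hρ : w1 / w2 ≤ (s2 : ℚ) / s1)
    (hu0 : 0 < u) (huu : u ≤ ((s1 : ℚ) - 1) * w1) :
    IsLeast {v : ℚ | ∃ i1 i2 : ℚ,
        0 ≤ i1 ∧ i1 ≤ (s1 : ℚ) - 1 ∧ 0 ≤ i2 ∧ i2 ≤ (s2 : ℚ) - 1 ∧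
        w1 * i1 + w2 * i2 = u ∧ v = ((s1 : ℚ) - i1) * ((s2 : ℚ) - i2)}
      ((s2 : ℚ) * ((s1 : ℚ) - u / w1)) :=
  min_distance_region_I_general s1 s2 hs2 w1 w2 u hw1 hw2 hρ hu0 huu
end

section
/- For any polynomial F over a field F, any point a ∈ F^m, and any multi-index k = (k_1,...,k_m), the multiplicity of the k-th Hasse derivative of F at a satisfies mult(F^{(k)}, a) ≥ mult(F, a) − (k_1 + ... + k_m). -/
open MvPolynomial

/-- The `k`-th Hasse derivative of a multivariate polynomial `F`: the coefficient of
`Z^k` in `F(X+Z)`, given by `F^{(k)} = ∑_d ∏_i C(d_i, k_i) · coeff_d(F) · X^{d−k}`. -/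
noncomputable def mvHasseDeriv {σ K : Type*} [CommRing K] [DecidableEq σ]
    (k : σ →₀ ℕ) (F : MvPolynomial σ K) : MvPolynomial σ K :=
  ∑ d ∈ F.support,
    MvPolynomial.monomial (d - k)
      ((∏ i ∈ k.support, Nat.choose (d i) (k i) : ℕ) • F.coeff d)

/-- `multGE F a M` means that the multiplicity of `F` at the point `a` is at least `M`,
i.e. all Hasse derivatives of order `< M` vanish at `a`. -/
def multGE {σ K : Type*} [CommRing K] [DecidableEq σ]
    (F : MvPolynomial σ K) (a : σ → K) (M : ℕ) : Prop :=
  ∀ k : σ →₀ ℕ, (k.sum fun _ n => n) < M → MvPolynomial.eval a (mvHasseDeriv k F) = 0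

/-- The multiplicity of `F` at `a`: the largest `M` such that all Hasse derivatives of
order `< M` vanish at `a` (junk value `0` for the zero polynomial, whose multiplicity
is infinite). -/
noncomputable def multAt {σ K : Type*} [CommRing K] [DecidableEq σ]
    (F : MvPolynomial σ K) (a : σ → K) : ℕ :=
  sSup {M | multGE F a M}

/-! Hasse derivatives compose up to a binomial factor,
`D^(j) (D^(k) F) = (∏ᵢ C(jᵢ + kᵢ, jᵢ)) • D^(j+k) F`, as one checks coefficientwise from
`C(e+j, j) C(e+j+k, k) = C(j+k, j) C(e+j+k, j+k)`. Hence each derivative of `F^(k)` of order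
`< M - |k|` is a multiple of a derivative of `F` of order `< M`, which vanishes at `a`. -/

theorem Nat.choose_add_mul_choose_add_add (a b c : ℕ) :
    (a + b).choose b * (a + b + c).choose c = (b + c).choose b * (a + b + c).choose (b + c) := by
  have h := Nat.choose_mul (n := a + b + c) (Nat.le_add_left c b)
  rw [Nat.add_sub_cancel, Nat.add_sub_cancel, ← Nat.choose_symm_add] at h
  rw [mul_comm, ← h, mul_comm]

section

variable {σ R : Type*} [CommRing R] [DecidableEq σ]

theorem coeff_mvHasseDeriv (k e : σ →₀ ℕ) (F : MvPolynomial σ R) :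
    (mvHasseDeriv k F).coeff e = (k.prod fun i n => (e i + n).choose n) • F.coeff (e + k) := by
  rw [mvHasseDeriv, coeff_sum, Finset.sum_eq_single (e + k)]
  · rw [coeff_monomial, if_pos (add_tsub_cancel_right e k)]
    rfl
  · intro d _ hd
    rw [coeff_monomial]
    split_ifs with hde
    · have hkd : ¬ k ≤ d := fun hkd => hd (by rw [← hde, tsub_add_cancel_of_le hkd])
      obtain ⟨i, hi⟩ := not_forall.mp (mt Finsupp.le_def.mpr hkd)
      rw [Finset.prod_eq_zero (i := i) (Finsupp.mem_support_iff.mpr (by omega))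
        (Nat.choose_eq_zero_of_lt (not_le.mp hi)), zero_smul]
    · rfl
  · intro he
    rw [notMem_support_iff.mp he, smul_zero, monomial_zero, coeff_zero]

theorem mvHasseDeriv_mvHasseDeriv (j k : σ →₀ ℕ) (F : MvPolynomial σ R) :
    mvHasseDeriv j (mvHasseDeriv k F)
      = (j.prod fun i n => (n + k i).choose n) • mvHasseDeriv (j + k) F := by
  ext e
  have hs : (j + k).support ⊆ j.support ∪ k.support := Finsupp.support_add
  simp only [coeff_smul, coeff_mvHasseDeriv, smul_smul, ← add_assoc]
  congr 1
  rw [Finsupp.prod_of_support_subset j Finset.subset_union_left _ (by simp),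
    Finsupp.prod_of_support_subset k Finset.subset_union_right _ (by simp),
    Finsupp.prod_of_support_subset j Finset.subset_union_left _ (by simp),
    Finsupp.prod_of_support_subset (j + k) hs _ (by simp), ← Finset.prod_mul_distrib,
    ← Finset.prod_mul_distrib]
  refine Finset.prod_congr rfl fun i _ => ?_
  simpa [add_assoc] using Nat.choose_add_mul_choose_add_add (e i) (j i) (k i)

end

/-- for any polynomial `F`, point `a` and multi-index `k`,
`mult(F^{(k)}, a) ≥ mult(F, a) − (k_1 + ⋯ + k_m)` (stated via the predicate
"multiplicity at least `M`", which also handles the zero polynomial correctly). -/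
theorem multGE_mvHasseDeriv {m : ℕ} {K : Type*} [Field K]
    (F : MvPolynomial (Fin m) K) (a : Fin m → K) (k : Fin m →₀ ℕ) (M : ℕ)
    (h : multGE F a M) :
    multGE (mvHasseDeriv k F) a (M - k.sum fun _ n => n) := by
  intro j hj
  have hjk : ((j + k).sum fun _ n => n) < M := by
    rw [Finsupp.sum_add_index' (fun _ => rfl) (fun _ _ _ => rfl)]
    omega
  rw [mvHasseDeriv_mvHasseDeriv, map_nsmul, h (j + k) hjk, smul_zero]
end

section
/- For F ∈ F[X_1,...,X_m] and an m-tuple Q = (Q_1,...,Q_l → m) of polynomials in l variables, and any a ∈ F^l, the multiplicity of the composition satisfies mult(F ∘ Q, a) ≥ mult(F, Q(a)). -/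
open MvPolynomial

/-!
The Hasse derivatives of `F` at `a` are the coefficients of the Taylor shift `F(X + a)`, so
`multGE F a M` says that `F(X + a)` lies in `𝔪 ^ M`, where `𝔪` is the ideal generated by the
variables. With `b = Q(a)`, the shifted composition is `(F ∘ Q)(X + a) = F(X + b) ∘ R` where
`R i = Q i (X + a) - b i` has no constant term, i.e. lies in `𝔪`; substituting elements of `𝔪`
maps `𝔪 ^ M` into `𝔪 ^ M`.
-/

theorem Finsupp.tsub_single_self_eq_erase {σ : Type*} (k : σ →₀ ℕ) (j : σ) :
    k - Finsupp.single j (k j) = k.erase j := by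
  ext i
  rcases eq_or_ne i j with rfl | hij <;> simp [*]

section Shift

variable {σ τ K : Type*} [CommRing K]

theorem X_add_C_pow_eq_sum (j : σ) (b : K) (t : ℕ) :
    (X j + C b) ^ t = ∑ r ∈ Finset.range (t + 1),
      monomial (Finsupp.single j r) ((t.choose r : K) * b ^ (t - r)) := by
  rw [add_pow]
  refine Finset.sum_congr rfl fun r _ => ?_
  rw [X_pow_eq_monomial, ← C_pow, ← C_eq_coe_nat, mul_assoc, ← C_mul, mul_comm, C_mul_monomial,
    mul_one, mul_comm]

theorem coeff_X_add_C_pow_mul (j : σ) (b : K) (t : ℕ) (P : MvPolynomial σ K)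
    (hP : ∀ e : σ →₀ ℕ, e j ≠ 0 → coeff e P = 0) (k : σ →₀ ℕ) :
    coeff k ((X j + C b) ^ t * P) = t.choose (k j) * b ^ (t - k j) * coeff (k.erase j) P := by
  rw [X_add_C_pow_eq_sum, Finset.sum_mul, coeff_sum]
  simp only [coeff_monomial_mul']
  rw [Finset.sum_eq_single (k j)]
  · rw [if_pos (Finsupp.single_le_iff.mpr le_rfl), Finsupp.tsub_single_self_eq_erase]
  · intro r _ hr
    rcases hr.lt_or_gt with hlt | hgt
    · rw [if_pos (Finsupp.single_le_iff.mpr hlt.le), hP, mul_zero]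
      rw [Finsupp.tsub_apply, Finsupp.single_eq_same]
      omega
    · rw [if_neg (by rw [Finsupp.single_le_iff]; omega)]
  · intro hk
    rw [Finset.mem_range, not_lt] at hk
    rw [if_pos (Finsupp.single_le_iff.mpr le_rfl), Nat.choose_eq_zero_of_lt (by omega)]
    simp

theorem coeff_prod_X_add_C_pow [DecidableEq σ] (a : σ → K) (n : σ → ℕ) (s : Finset σ)
    (k : σ →₀ ℕ) :
    coeff k (∏ i ∈ s, (X i + C (a i)) ^ n i) =
      if k.support ⊆ s then ∏ i ∈ s, (n i).choose (k i) * a i ^ (n i - k i) else 0 := by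
  induction s using Finset.induction generalizing k with
  | empty => by_cases hk : k = 0 <;> simp [coeff_one, hk, eq_comm]
  | @insert j s hj ih =>
    have hP : ∀ e : σ →₀ ℕ, e j ≠ 0 → coeff e (∏ i ∈ s, (X i + C (a i)) ^ n i) = 0 :=
      fun e he => by rw [ih, if_neg fun h => hj (h (Finsupp.mem_support_iff.mpr he))]
    have herase : ∀ i ∈ s, k.erase j i = k i :=
      fun i hi => Finsupp.erase_ne (by rintro rfl; exact hj hi)
    rw [Finset.prod_insert hj, coeff_X_add_C_pow_mul j _ _ _ hP, ih, Finset.prod_insert hj,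
      Finset.prod_congr rfl fun i hi => by rw [herase i hi], Finsupp.support_erase]
    simp only [← Finset.subset_insert_iff]
    split_ifs <;> ring

theorem coeff_zero_aeval_X_add_C (a : σ → K) (P : MvPolynomial σ K) :
    coeff 0 (aeval (fun i => X i + C (a i)) P) = eval a P := by
  have h : constantCoeff.comp
      (aeval fun i => X i + C (a i) : _ →ₐ[K] MvPolynomial σ K).toRingHom = eval a := by
    ext <;> simp
  exact congr($h P)

theorem aeval_aeval_X_add_C (g : σ → MvPolynomial τ K) (b : σ → K) (F : MvPolynomial σ K) :
    aeval g (aeval (fun i => X i + C (b i)) F) = aeval (fun i => g i + C (b i)) F := by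
  rw [comp_aeval_apply]
  simp

theorem sub_C_coeff_zero_mem_idealOfVars (P : MvPolynomial σ K) :
    P - C (coeff 0 P) ∈ idealOfVars σ K := by
  rw [← pow_one (idealOfVars σ K), mem_pow_idealOfVars_iff']
  intro x hx
  rw [Nat.lt_one_iff, Finsupp.degree_eq_zero_iff] at hx
  simp [hx]

theorem aeval_mem_pow_idealOfVars {G : MvPolynomial τ K} {M : ℕ}
    (hG : G ∈ idealOfVars τ K ^ M) {g : τ → MvPolynomial σ K}
    (hg : ∀ i, g i ∈ idealOfVars σ K) : aeval g G ∈ idealOfVars σ K ^ M := by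
  have hmap : (idealOfVars τ K).map (aeval (R := K) g) ≤ idealOfVars σ K := by
    rw [Ideal.map_span, Ideal.span_le]
    rintro _ ⟨_, ⟨i, rfl⟩, rfl⟩
    simpa using hg i
  exact Ideal.pow_right_mono hmap M
    (Ideal.map_pow (aeval (R := K) g) _ M ▸ Ideal.mem_map_of_mem _ hG)

end Shift

section HasseDeriv

variable {σ K : Type*} [CommRing K] [DecidableEq σ]

theorem mvHasseDeriv_eq_sum (k : σ →₀ ℕ) (F : MvPolynomial σ K) :
    mvHasseDeriv k F = (AddMonoidAlgebra.coeff F).sum fun d c =>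
      monomial (d - k) ((∏ i ∈ k.support, (d i).choose (k i) : ℕ) • c) := by
  rw [sum_def]
  rfl

theorem mvHasseDeriv_add (k : σ →₀ ℕ) (F G : MvPolynomial σ K) :
    mvHasseDeriv k (F + G) = mvHasseDeriv k F + mvHasseDeriv k G := by
  simp only [mvHasseDeriv_eq_sum, AddMonoidAlgebra.coeff_add]
  exact Finsupp.sum_add_index' (by simp) (by simp [smul_add])

theorem mvHasseDeriv_monomial (k d : σ →₀ ℕ) (c : K) :
    mvHasseDeriv k (monomial d c) =
      monomial (d - k) ((∏ i ∈ k.support, (d i).choose (k i) : ℕ) • c) := by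
  rw [mvHasseDeriv_eq_sum]
  exact sum_monomial_eq (by simp)

theorem coeff_prod_X_add_C_pow_finsupp (a : σ → K) (d k : σ →₀ ℕ) :
    coeff k (d.prod fun i n => (X i + C (a i)) ^ n) =
      (∏ i ∈ k.support, (d i).choose (k i) : ℕ) * (d - k).prod fun i n => a i ^ n := by
  rw [Finsupp.prod, coeff_prod_X_add_C_pow]
  split_ifs with hks
  · rw [Finset.prod_mul_distrib, Nat.cast_prod, Finsupp.prod]
    congr 1
    · exact (Finset.prod_subset hks fun i _ hi => by simp [Finsupp.notMem_support_iff.mp hi]).symm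
    · refine (Finset.prod_subset Finsupp.support_tsub fun i _ hi => ?_).symm
      rw [← Finsupp.tsub_apply, Finsupp.notMem_support_iff.mp hi, pow_zero]
  · obtain ⟨i, hik, hid⟩ := Finset.not_subset.mp hks
    rw [Finset.prod_eq_zero hik, Nat.cast_zero, zero_mul]
    rw [Finsupp.notMem_support_iff.mp hid]
    exact Nat.choose_eq_zero_of_lt (Nat.pos_of_ne_zero (Finsupp.mem_support_iff.mp hik))

theorem eval_mvHasseDeriv (a : σ → K) (k : σ →₀ ℕ) (F : MvPolynomial σ K) :
    eval a (mvHasseDeriv k F) = coeff k (aeval (fun i => X i + C (a i)) F) := by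
  induction F using MvPolynomial.induction_on' with
  | monomial d c =>
    rw [mvHasseDeriv_monomial, eval_monomial, aeval_monomial, algebraMap_eq, coeff_C_mul,
      coeff_prod_X_add_C_pow_finsupp, nsmul_eq_mul]
    ring
  | add F G hF hG => rw [mvHasseDeriv_add, map_add, map_add, coeff_add, hF, hG]

theorem multGE_iff_mem_pow_idealOfVars (F : MvPolynomial σ K) (a : σ → K) (M : ℕ) :
    multGE F a M ↔ aeval (fun i => X i + C (a i)) F ∈ idealOfVars σ K ^ M := by
  simp only [multGE, mem_pow_idealOfVars_iff', eval_mvHasseDeriv]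
  rfl

end HasseDeriv

/-- for `F ∈ F[X_1,…,X_m]`, an `m`-tuple `Q = (Q_1,…,Q_m)` of
polynomials in `l` variables and any `a ∈ F^l`, the multiplicity of the composition
satisfies `mult(F ∘ Q, a) ≥ mult(F, Q(a))`. -/
theorem multGE_comp {m l : ℕ} {K : Type*} [Field K]
    (F : MvPolynomial (Fin m) K) (Q : Fin m → MvPolynomial (Fin l) K)
    (a : Fin l → K) (M : ℕ)
    (h : multGE F (fun i => MvPolynomial.eval a (Q i)) M) :
    multGE (MvPolynomial.aeval Q F) a M := by
  set shift := aeval (R := K) fun j => (X j + C (a j) : MvPolynomial (Fin l) K)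
  rw [multGE_iff_mem_pow_idealOfVars] at h ⊢
  have hcomp : shift (aeval Q F) = aeval (fun i => shift (Q i) - C (eval a (Q i)))
      (aeval (fun i => X i + C (eval a (Q i))) F) := by
    rw [comp_aeval_apply, aeval_aeval_X_add_C]
    simp only [sub_add_cancel]
  rw [hcomp]
  refine aeval_mem_pow_idealOfVars h fun i => ?_
  rw [← coeff_zero_aeval_X_add_C]
  exact sub_C_coeff_zero_mem_idealOfVars _
end

section
/- (Schwartz–Zippel with multiplicities, total degree version) Let F be a nonzero polynomial of total degree u in F[X_1,...,X_m] and S ⊆ F finite. Then the number of zeros of F of multiplicity at least r in S^m is at most (u/r)|S|^{m−1}. -/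
open MvPolynomial

open Finset Classical

/-!
The multiplicity of `F` at `a` is the lowest degree of a monomial of `F(X + a)`, since the
coefficients of `F(X + a)` are the Hasse derivatives of `F` at `a`. So it suffices to bound the
sum of these lowest degrees over `a ∈ Sᵐ` by `deg F · |S|^(m-1)`.

Write `F = ∑ⱼ Fⱼ(X') X₀ʲ` with leading coefficient `Fₜ`, fix `a' ∈ Sᵐ⁻¹` and a monomial `X'ᶜ` of
lowest degree in `Fₜ(X' + a')`. The coefficient of `X'ᶜ` in `F(X + (b, a'))`, as a polynomial in
`X₀`, is `Q(X₀ + b)` for one nonzero `Q` of degree at most `t`; hence the multiplicity of `F` at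
`(b, a')` is at most `|c|` plus the multiplicity of `b` as a root of `Q`. Summing over `b ∈ S`
bounds the total by `|S| · mult(Fₜ, a') + t`, and induction on `m`, using `deg Fₜ + t ≤ deg F`,
gives the claim.
-/

open scoped Polynomial

theorem Polynomial.sum_rootMultiplicity_le_natDegree {R : Type*} [CommRing R] [IsDomain R]
    (p : R[X]) (S : Finset R) : ∑ b ∈ S, p.rootMultiplicity b ≤ p.natDegree := by
  calc ∑ b ∈ S, p.rootMultiplicity b = ∑ b ∈ S, p.roots.count b := by simp_rw [count_roots]
    _ ≤ ∑ b ∈ S ∪ p.roots.toFinset, p.roots.count b := sum_le_sum_of_subset subset_union_left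
    _ = Multiset.card p.roots :=
      Multiset.sum_count_eq_card fun b hb => mem_union_right _ (Multiset.mem_toFinset.mpr hb)
    _ ≤ p.natDegree := p.card_roots'

theorem Fintype.sum_piFinset_fin_succ {α M : Type*} [AddCommMonoid M] {n : ℕ} (S : Finset α)
    (g : (Fin (n + 1) → α) → M) :
    ∑ x ∈ piFinset fun _ => S, g x =
      ∑ a ∈ piFinset fun _ : Fin n => S, ∑ b ∈ S, g (Fin.cons b a) := by
  have hpi := filter_piFinset_eq_map_consEquiv (fun _ : Fin (n + 1) => S) (fun _ => True)
  simp only [filter_true] at hpi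
  rw [hpi, sum_map, sum_product_right]
  rfl

namespace MvPolynomial

section Taylor

variable {σ R : Type*} [CommRing R]

noncomputable def taylor (a : σ → R) : MvPolynomial σ R →ₐ[R] MvPolynomial σ R :=
  aeval fun i => X i + C (a i)

theorem taylor_neg_taylor (a : σ → R) (p : MvPolynomial σ R) : taylor (-a) (taylor a p) = p := by
  have : (taylor (-a)).comp (taylor a) = AlgHom.id R _ := algHom_ext fun i => by simp [taylor]
  exact DFunLike.congr_fun this p

theorem taylor_injective (a : σ → R) : Function.Injective (taylor a) :=
  Function.LeftInverse.injective (taylor_neg_taylor a)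

theorem X_add_C_pow (i : σ) (r : R) (e : ℕ) :
    (X i + C r) ^ e =
      ∑ j ∈ range (e + 1), monomial (Finsupp.single i j) ((e.choose j : R) * r ^ (e - j)) := by
  rw [add_pow]
  refine sum_congr rfl fun j _ => ?_
  rw [X_pow_eq_monomial, ← C_pow, ← map_natCast C, mul_assoc, ← C_mul, mul_comm (monomial _ _),
    C_mul_monomial, mul_one, mul_comm]

theorem coeff_prod_X_add_C_pow [Fintype σ] [DecidableEq σ] (a : σ → R) (d k : σ →₀ ℕ) :
    coeff k (∏ i, (X i + C (a i)) ^ d i) = ∏ i, ((d i).choose (k i) * a i ^ (d i - k i) : R) := by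
  simp only [X_add_C_pow]
  rw [prod_univ_sum]
  simp only [← monomial_sum_prod, coeff_sum, coeff_monomial,
    ← Finsupp.equivFunOnFinite_symm_eq_sum, Equiv.symm_apply_eq, Finsupp.equivFunOnFinite_apply,
    sum_ite_eq', Fintype.mem_piFinset, mem_range, Nat.lt_succ_iff]
  split_ifs with hk
  · rfl
  · obtain ⟨i, hi⟩ := not_forall.mp hk
    refine (prod_eq_zero (mem_univ i) ?_).symm
    rw [Nat.choose_eq_zero_of_lt (not_le.mp hi), Nat.cast_zero, zero_mul]

theorem taylor_monomial [Fintype σ] (a : σ → R) (d : σ →₀ ℕ) (c : R) :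
    taylor a (monomial d c) = C c * ∏ i, (X i + C (a i)) ^ d i := by
  rw [taylor, aeval_monomial, Finsupp.prod_fintype _ _ fun _ => pow_zero _, algebraMap_eq]

theorem coeff_taylor [Fintype σ] [DecidableEq σ] (a : σ → R) (F : MvPolynomial σ R)
    (k : σ →₀ ℕ) : coeff k (taylor a F) = eval a (mvHasseDeriv k F) := by
  conv_lhs => rw [← F.support_sum_monomial_coeff]
  simp only [mvHasseDeriv, map_sum, coeff_sum]
  refine sum_congr rfl fun d _ => ?_
  have hchoose : ((∏ i ∈ k.support, (d i).choose (k i) : ℕ) : R) =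
      ∏ i, ((d i).choose (k i) : R) := by
    rw [Nat.cast_prod]
    exact prod_subset (subset_univ _) fun i _ hi => by simp [Finsupp.notMem_support_iff.mp hi]
  rw [taylor_monomial, coeff_C_mul, coeff_prod_X_add_C_pow, eval_monomial,
    Finsupp.prod_fintype _ _ fun _ => pow_zero _, nsmul_eq_mul, hchoose, prod_mul_distrib]
  simp only [Finsupp.tsub_apply]
  ring

end Taylor

section MinDegree

variable {σ R : Type*} [CommSemiring R]

-- For `p ≠ 0` this is the multiplicity of `p` at the origin; `sInf ∅ = 0` makes it `0` at `p = 0`.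
noncomputable def minDegree (p : MvPolynomial σ R) : ℕ :=
  sInf (Finsupp.degree '' (p.support : Set (σ →₀ ℕ)))

theorem minDegree_le_degree {p : MvPolynomial σ R} {d : σ →₀ ℕ} (h : d ∈ p.support) :
    p.minDegree ≤ d.degree :=
  Nat.sInf_le ⟨d, h, rfl⟩

theorem exists_degree_eq_minDegree {p : MvPolynomial σ R} (hp : p ≠ 0) :
    ∃ d ∈ p.support, d.degree = p.minDegree :=
  Nat.sInf_mem ((coe_nonempty.mpr (support_nonempty.mpr hp)).image _)

theorem le_minDegree {p : MvPolynomial σ R} (hp : p ≠ 0) {r : ℕ}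
    (h : ∀ d ∈ p.support, r ≤ d.degree) : r ≤ p.minDegree := by
  obtain ⟨d, hd, hdeg⟩ := exists_degree_eq_minDegree hp
  exact hdeg ▸ h d hd

theorem minDegree_of_isEmpty [IsEmpty σ] (p : MvPolynomial σ R) : p.minDegree = 0 := by
  rcases eq_or_ne p 0 with rfl | hp
  · simp [minDegree]
  · obtain ⟨d, -, hdeg⟩ := exists_degree_eq_minDegree hp
    rw [← hdeg, Subsingleton.elim d 0, map_zero]

end MinDegree

theorem le_minDegree_taylor_of_multGE {σ R : Type*} [CommRing R] [Fintype σ] [DecidableEq σ]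
    {F : MvPolynomial σ R} (hF : F ≠ 0) {a : σ → R} {r : ℕ} (h : multGE F a r) :
    r ≤ (taylor a F).minDegree := by
  refine le_minDegree ((map_ne_zero_iff _ (taylor_injective a)).mpr hF) ?_
  intro d hd
  by_contra! hlt
  exact mem_support_iff.mp hd ((coeff_taylor a F d).trans (h d hlt))

section CoeffPoly

variable {σ R : Type*} [CommSemiring R]

noncomputable def coeffPoly (c : σ →₀ ℕ) (p : (MvPolynomial σ R)[X]) : R[X] :=
  .ofFinsupp ⟨p.toFinsupp.coeff.mapRange (coeff c) (coeff_zero c)⟩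

theorem coeff_coeffPoly (c : σ →₀ ℕ) (p : (MvPolynomial σ R)[X]) (j : ℕ) :
    (coeffPoly c p).coeff j = coeff c (p.coeff j) :=
  rfl

theorem natDegree_coeffPoly_le (c : σ →₀ ℕ) (p : (MvPolynomial σ R)[X]) :
    (coeffPoly c p).natDegree ≤ p.natDegree :=
  Polynomial.natDegree_le_iff_coeff_eq_zero.mpr fun j hj => by
    rw [coeff_coeffPoly, Polynomial.coeff_eq_zero_of_natDegree_lt hj, coeff_zero]

theorem coeffPoly_hasseDeriv (c : σ →₀ ℕ) (p : (MvPolynomial σ R)[X]) (j : ℕ) :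
    coeffPoly c (p.hasseDeriv j) = (coeffPoly c p).hasseDeriv j := by
  ext i
  rw [coeff_coeffPoly, Polynomial.hasseDeriv_coeff, Polynomial.hasseDeriv_coeff, coeff_coeffPoly,
    ← map_natCast C, coeff_C_mul]

theorem coeff_eval_C_eq_eval_coeffPoly (c : σ →₀ ℕ) (b : R) (p : (MvPolynomial σ R)[X]) :
    coeff c (p.eval (C b)) = (coeffPoly c p).eval b := by
  rw [Polynomial.eval_eq_sum_range, Polynomial.eval_eq_sum_range'
    (Nat.lt_succ_of_le (natDegree_coeffPoly_le c p)), coeff_sum]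
  refine sum_congr rfl fun j _ => ?_
  rw [coeff_coeffPoly, ← C_pow, mul_comm, coeff_C_mul, mul_comm]

theorem coeffPoly_taylor (c : σ →₀ ℕ) (b : R) (p : (MvPolynomial σ R)[X]) :
    coeffPoly c (p.taylor (C b)) = (coeffPoly c p).taylor b := by
  ext j
  rw [coeff_coeffPoly, Polynomial.taylor_coeff, Polynomial.taylor_coeff,
    coeff_eval_C_eq_eval_coeffPoly, coeffPoly_hasseDeriv]

end CoeffPoly

theorem finSuccEquiv_taylor_cons {R : Type*} [CommRing R] {n : ℕ} (b : R) (a : Fin n → R)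
    (F : MvPolynomial (Fin (n + 1)) R) :
    finSuccEquiv R n (taylor (Fin.cons b a) F) =
      ((finSuccEquiv R n F).map (taylor a).toRingHom).taylor (C b) := by
  have : (finSuccEquiv R n).toAlgHom.comp (taylor (Fin.cons b a)) =
      ((Polynomial.taylorAlgHom (C b : MvPolynomial (Fin n) R)).restrictScalars R).comp
        ((Polynomial.mapAlgHom (taylor a)).comp (finSuccEquiv R n).toAlgHom) := by
    refine algHom_ext fun i => ?_
    cases i using Fin.cases <;> simp [taylor, finSuccEquiv_apply]
  exact DFunLike.congr_fun this F

theorem minDegree_le_natTrailingDegree_coeffPoly_add {R : Type*} [CommSemiring R] {n : ℕ}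
    (H : MvPolynomial (Fin (n + 1)) R) (c : Fin n →₀ ℕ)
    (h : coeffPoly c (finSuccEquiv R n H) ≠ 0) :
    H.minDegree ≤ (coeffPoly c (finSuccEquiv R n H)).natTrailingDegree + c.degree := by
  set k := (coeffPoly c (finSuccEquiv R n H)).natTrailingDegree
  have hmem : Finsupp.cons k c ∈ H.support := by
    rw [mem_support_iff, ← finSuccEquiv_coeff_coeff, ← coeff_coeffPoly]
    exact Polynomial.trailingCoeff_nonzero_iff_nonzero.mpr h
  have hdeg : (Finsupp.cons k c).degree = k + c.degree := by
    simp [Finsupp.degree_eq_sum, Fin.sum_univ_succ]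
  exact hdeg ▸ minDegree_le_degree hmem

variable {R : Type*} [CommRing R] [IsDomain R]

theorem sum_minDegree_taylor_cons_le {n : ℕ} {F : MvPolynomial (Fin (n + 1)) R} (hF : F ≠ 0)
    (S : Finset R) (a : Fin n → R) :
    ∑ b ∈ S, (taylor (Fin.cons b a) F).minDegree ≤
      (finSuccEquiv R n F).natDegree +
        #S * (taylor a (finSuccEquiv R n F).leadingCoeff).minDegree := by
  set f := finSuccEquiv R n F
  have hlc : taylor a f.leadingCoeff ≠ 0 :=
    (map_ne_zero_iff _ (taylor_injective a)).mpr (by simpa [f] using hF)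
  obtain ⟨c, hc, hc_deg⟩ := exists_degree_eq_minDegree hlc
  set q := coeffPoly c (f.map (taylor a).toRingHom)
  have hq : q ≠ 0 := by
    intro h
    have hcoeff : q.coeff f.natDegree = 0 := by rw [h, Polynomial.coeff_zero]
    rw [coeff_coeffPoly, Polynomial.coeff_map] at hcoeff
    exact mem_support_iff.mp hc hcoeff
  have hb : ∀ b, (taylor (Fin.cons b a) F).minDegree ≤ q.rootMultiplicity b + c.degree := by
    intro b
    have hslice : coeffPoly c (finSuccEquiv R n (taylor (Fin.cons b a) F)) = q.taylor b := by
      rw [finSuccEquiv_taylor_cons, coeffPoly_taylor]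
    rw [Polynomial.rootMultiplicity_eq_natTrailingDegree, ← Polynomial.taylor_apply, ← hslice]
    exact minDegree_le_natTrailingDegree_coeffPoly_add _ c
      (by rwa [hslice, Ne, Polynomial.taylor_eq_zero])
  calc ∑ b ∈ S, (taylor (Fin.cons b a) F).minDegree
      ≤ ∑ b ∈ S, (q.rootMultiplicity b + c.degree) := sum_le_sum fun b _ => hb b
    _ = ∑ b ∈ S, q.rootMultiplicity b + #S * c.degree := by
      rw [sum_add_distrib, sum_const, smul_eq_mul]
    _ ≤ f.natDegree + #S * c.degree := by
      gcongr
      exact (q.sum_rootMultiplicity_le_natDegree S).trans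
        ((natDegree_coeffPoly_le _ _).trans Polynomial.natDegree_map_le)
    _ = _ := by rw [hc_deg]

theorem sum_minDegree_taylor_mul_card_le (S : Finset R) :
    ∀ {n : ℕ} {F : MvPolynomial (Fin n) R}, F ≠ 0 →
      (∑ x ∈ Fintype.piFinset fun _ => S, (taylor x F).minDegree) * #S ≤
        F.totalDegree * #S ^ n
  | 0, F, _ => by simp [minDegree_of_isEmpty]
  | n + 1, F, hF => by
    set f := finSuccEquiv R n F
    have hlc : f.leadingCoeff ≠ 0 := by simpa [f] using hF
    have ih := sum_minDegree_taylor_mul_card_le S hlc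
    have hdeg : f.leadingCoeff.totalDegree + f.natDegree ≤ F.totalDegree :=
      totalDegree_coeff_finSuccEquiv_add_le F _ hlc
    have hstep := sum_le_sum fun a (_ : a ∈ Fintype.piFinset fun _ : Fin n => S) =>
      sum_minDegree_taylor_cons_le hF S a
    rw [sum_add_distrib, sum_const, Fintype.card_piFinset_const, ← mul_sum, smul_eq_mul] at hstep
    rw [Fintype.sum_piFinset_fin_succ]
    set A := ∑ a ∈ Fintype.piFinset fun _ : Fin n => S, (taylor a f.leadingCoeff).minDegree
    calc _ ≤ (#S ^ n * f.natDegree + #S * A) * #S := by gcongr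
      _ = #S ^ (n + 1) * f.natDegree + #S * (A * #S) := by ring
      _ ≤ #S ^ (n + 1) * f.natDegree + #S * (f.leadingCoeff.totalDegree * #S ^ n) := by gcongr
      _ = (f.leadingCoeff.totalDegree + f.natDegree) * #S ^ (n + 1) := by ring
      _ ≤ F.totalDegree * #S ^ (n + 1) := by gcongr

theorem sum_minDegree_taylor_le (S : Finset R) {n : ℕ} {F : MvPolynomial (Fin n) R}
    (hF : F ≠ 0) :
    ∑ x ∈ Fintype.piFinset fun _ => S, (taylor x F).minDegree ≤
      F.totalDegree * #S ^ (n - 1) := by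
  rcases n with _ | n
  · simp [minDegree_of_isEmpty]
  rcases S.eq_empty_or_nonempty with rfl | hS
  · simp
  · refine Nat.le_of_mul_le_mul_right ?_ hS.card_pos
    simpa [pow_succ, mul_assoc] using sum_minDegree_taylor_mul_card_le S hF

end MvPolynomial

/-- Schwartz–Zippel with multiplicities, total degree version: a nonzero
polynomial `F` of total degree `u` has at most `(u/r)|S|^{m−1}` zeros of multiplicity
at least `r` in `S^m`. -/
theorem zeros_mult_r_total_degree_bound {m : ℕ} {K : Type*} [Field K]
    (S : Finset K) (F : MvPolynomial (Fin m) K) (r u : ℕ)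
    (hr : 1 ≤ r) (hF : F ≠ 0) (hu : F.totalDegree = u) :
    (((Fintype.piFinset fun _ : Fin m => S).filter (fun a => multGE F a r)).card : ℝ)
      ≤ (u / r : ℝ) * (S.card : ℝ) ^ (m - 1) := by
  set T := (Fintype.piFinset fun _ : Fin m => S).filter fun a => multGE F a r
  have hT : ∀ a ∈ T, r ≤ (MvPolynomial.taylor a F).minDegree := fun a ha =>
    MvPolynomial.le_minDegree_taylor_of_multGE hF (mem_filter.mp ha).2
  have hcount : #T * r ≤ u * #S ^ (m - 1) :=
    calc #T * r ≤ ∑ a ∈ T, (MvPolynomial.taylor a F).minDegree := by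
          simpa using card_nsmul_le_sum T _ r hT
      _ ≤ ∑ a ∈ Fintype.piFinset fun _ => S, (MvPolynomial.taylor a F).minDegree :=
          sum_le_sum_of_subset (filter_subset _ _)
      _ ≤ u * #S ^ (m - 1) := hu ▸ MvPolynomial.sum_minDegree_taylor_le S hF
  rw [div_mul_eq_mul_div, le_div_iff₀ (by exact_mod_cast hr)]
  exact_mod_cast hcount
end
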